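/- (Fredholm solvability condition.) Let U₀ solve U₀'' = f(U₀) with U₀(-∞)=u_a, U₀(+∞)=u_b, U₀'(±∞)=0, U₀' ∈ L²(ℝ). If U₁ : ℝ → ℝ is smooth with bounded derivatives such that W₀ = -U₁'' + κ·U₀' + f'(U₀)U₁ holds on ℝ for constants W₀, κ ∈ ℝ, and U₁'(z)U₀'(z), U₁(z)U₀''(z) → 0 as |z| → ∞, then W₀·(u_b - u_a) = κ·∫_ℝ (U₀')² dz, i.e. W₀ = S·κ with S = (∫_ℝ(U₀')²)/(u_b-u_a). -/

import Mathlib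

open Filter MeasureTheory

/-!
Differentiating the profile equation `U₀'' = f(U₀)` shows that `U₀'` lies in the kernel of
`∂_zz - f'(U₀)`. Hence the Wronskian `U₁' U₀' - U₁ U₀''` has derivative
`(U₁'' - f'(U₀) U₁) U₀' = (κ U₀' - W₀) U₀'`, so `W₀ U₀ + U₁' U₀' - U₁ U₀''` is a primitive of
`κ (U₀')²`. Its limits at `∓∞` are `W₀ u_a` and `W₀ u_b` by the decay assumptions.
-/

theorem hasDerivAt_wronskian {u v : ℝ → ℝ} {z : ℝ} (hu : DifferentiableAt ℝ u z)
    (hu' : DifferentiableAt ℝ (deriv u) z) (hv : DifferentiableAt ℝ v z)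
    (hv' : DifferentiableAt ℝ (deriv v) z) :
    HasDerivAt (fun x => deriv u x * v x - u x * deriv v x)
      (deriv (deriv u) z * v z - u z * deriv (deriv v) z) z := by
  exact ((hu'.hasDerivAt.mul hv.hasDerivAt).sub (hu.hasDerivAt.mul hv'.hasDerivAt)).congr_deriv
    (by ring)

theorem hasDerivAt_deriv_deriv_of_profile {f U : ℝ → ℝ} {z : ℝ}
    (hU : ∀ x, deriv (deriv U) x = f (U x)) (hf : DifferentiableAt ℝ f (U z))
    (hUz : DifferentiableAt ℝ U z) :
    HasDerivAt (deriv (deriv U)) (deriv f (U z) * deriv U z) z := by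
  rw [funext hU]
  exact hf.hasDerivAt.comp z hUz.hasDerivAt

theorem hasDerivAt_solvability_flux {f U₀ U₁ : ℝ → ℝ} {W₀ κ : ℝ} (hf : Differentiable ℝ f)
    (hU₀ : ContDiff ℝ 2 U₀) (hU₁ : ContDiff ℝ 2 U₁)
    (hprofile : ∀ z, deriv (deriv U₀) z = f (U₀ z))
    (heq : ∀ z, W₀ = -(deriv (deriv U₁) z) + κ * deriv U₀ z + deriv f (U₀ z) * U₁ z) (z : ℝ) :
    HasDerivAt (fun x => W₀ * U₀ x + (deriv U₁ x * deriv U₀ x - U₁ x * deriv (deriv U₀) x))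
      (κ * deriv U₀ z ^ 2) z := by
  have hU₀z : DifferentiableAt ℝ U₀ z := hU₀.differentiable two_ne_zero z
  have hU₁z : DifferentiableAt ℝ U₁ z := hU₁.differentiable two_ne_zero z
  have hU₀'z : DifferentiableAt ℝ (deriv U₀) z :=
    (hU₀.iterate_deriv' 1 1).differentiable one_ne_zero z
  have hU₁'z : DifferentiableAt ℝ (deriv U₁) z :=
    (hU₁.iterate_deriv' 1 1).differentiable one_ne_zero z
  have hkernel := hasDerivAt_deriv_deriv_of_profile hprofile (hf (U₀ z)) hU₀z
  have hW := hasDerivAt_wronskian hU₁z hU₁'z hU₀'z hkernel.differentiableAt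
  refine ((hU₀z.hasDerivAt.const_mul W₀).add hW).congr_deriv ?_
  rw [hkernel.deriv]
  linear_combination deriv U₀ z * heq z

theorem stmt7_general (u_a u_b W₀ κ : ℝ)
    (f : ℝ → ℝ) (hf : ContDiff ℝ 1 f)
    (U₀ : ℝ → ℝ) (hU₀reg : ContDiff ℝ 2 U₀)
    (hU₀eq : ∀ z : ℝ, deriv (deriv U₀) z = f (U₀ z))
    (hbot : Tendsto U₀ atBot (nhds u_a)) (htop : Tendsto U₀ atTop (nhds u_b))
    (hL2 : Integrable (fun z => (deriv U₀ z)^2))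
    (U₁ : ℝ → ℝ) (hU₁reg : ContDiff ℝ 2 U₁)
    (heq : ∀ z : ℝ, W₀ = -(deriv (deriv U₁) z) + κ * deriv U₀ z + deriv f (U₀ z) * U₁ z)
    (hdec1top : Tendsto (fun z => deriv U₁ z * deriv U₀ z) atTop (nhds 0))
    (hdec1bot : Tendsto (fun z => deriv U₁ z * deriv U₀ z) atBot (nhds 0))
    (hdec2top : Tendsto (fun z => U₁ z * deriv (deriv U₀) z) atTop (nhds 0))
    (hdec2bot : Tendsto (fun z => U₁ z * deriv (deriv U₀) z) atBot (nhds 0)) :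
    W₀ * (u_b - u_a) = κ * ∫ z : ℝ, (deriv U₀ z)^2 := by
  have hflux := hasDerivAt_solvability_flux (hf.differentiable one_ne_zero) hU₀reg hU₁reg
    hU₀eq heq
  have hlim_bot := (hbot.const_mul W₀).add (hdec1bot.sub hdec2bot)
  have hlim_top := (htop.const_mul W₀).add (hdec1top.sub hdec2top)
  simp only [sub_zero, add_zero] at hlim_bot hlim_top
  rw [← integral_const_mul, integral_of_hasDerivAt_of_tendsto hflux (hL2.const_mul κ)
    hlim_bot hlim_top]
  ring

theorem stmt7 (u_a u_b W₀ κ : ℝ) (hab : u_a < u_b)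
    (f : ℝ → ℝ) (hf : ContDiff ℝ 1 f)
    (U₀ : ℝ → ℝ) (hU₀reg : ContDiff ℝ 2 U₀)
    (hU₀eq : ∀ z : ℝ, deriv (deriv U₀) z = f (U₀ z))
    (hbot : Tendsto U₀ atBot (nhds u_a)) (htop : Tendsto U₀ atTop (nhds u_b))
    (hdbot : Tendsto (deriv U₀) atBot (nhds 0))
    (hdtop : Tendsto (deriv U₀) atTop (nhds 0))
    (hL2 : Integrable (fun z => (deriv U₀ z)^2))
    (U₁ : ℝ → ℝ) (hU₁reg : ContDiff ℝ 2 U₁)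
    (heq : ∀ z : ℝ, W₀ = -(deriv (deriv U₁) z) + κ * deriv U₀ z + deriv f (U₀ z) * U₁ z)
    (hdec1top : Tendsto (fun z => deriv U₁ z * deriv U₀ z) atTop (nhds 0))
    (hdec1bot : Tendsto (fun z => deriv U₁ z * deriv U₀ z) atBot (nhds 0))
    (hdec2top : Tendsto (fun z => U₁ z * deriv (deriv U₀) z) atTop (nhds 0))
    (hdec2bot : Tendsto (fun z => U₁ z * deriv (deriv U₀) z) atBot (nhds 0)) :
    W₀ * (u_b - u_a) = κ * ∫ z : ℝ, (deriv U₀ z)^2 :=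
  stmt7_general u_a u_b W₀ κ f hf U₀ hU₀reg hU₀eq hbot htop hL2 U₁ hU₁reg heq hdec1top hdec1bot
    hdec2top hdec2bot
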